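/- arXiv:2008.13708 — 2 statements merged into one kernel-verified Lean document; each statement's English description precedes it below -/
import Mathlib

section
/- Let X ∈ B(H) and let T = [[0, X],[0, 0]] on H ⊕ H. If α > 1/2 then ‖T‖_α = ‖X‖/(2√α), and if 0 ≤ α ≤ 1/2 then ‖T‖_α = √(1−α)·‖X‖. -/
open scoped Matrix

/-- The `α`-norm of a bounded operator `T`:
`‖T‖_α = sup {√(α|⟨Tx,x⟩|² + (1-α)‖Tx‖²) : ‖x‖ = 1}`. -/
noncomputable def alphaNorm {H : Type*} [NormedAddCommGroup H] [InnerProductSpace ℂ H]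
    (α : ℝ) (T : H →L[ℂ] H) : ℝ :=
  sSup {r : ℝ | ∃ x : H, ‖x‖ = 1 ∧
    r = Real.sqrt (α * ‖(inner ℂ (T x) x : ℂ)‖ ^ 2 + (1 - α) * ‖T x‖ ^ 2)}

/-- The numerical radius `w(T) = sup {|⟨Tx,x⟩| : ‖x‖ = 1}`. -/
noncomputable def numRadius {H : Type*} [NormedAddCommGroup H] [InnerProductSpace ℂ H]
    (T : H →L[ℂ] H) : ℝ :=
  sSup {r : ℝ | ∃ x : H, ‖x‖ = 1 ∧ r = ‖(inner ℂ (T x) x : ℂ)‖}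

variable {H : Type*} [NormedAddCommGroup H] [InnerProductSpace ℂ H]

/-- The canonical inclusion `H × H → H ⊕₂ H`. -/
noncomputable def pr (x y : H) : WithLp 2 (H × H) := (WithLp.equiv 2 (H × H)).symm (x, y)

/-! For a unit vector `z = (x, y)` we have `⟨Tz, z⟩ = ⟨Xy, x⟩` and `‖Tz‖ = ‖Xy‖`, so by
Cauchy–Schwarz the radicand is at most `‖Xy‖² (1 - α‖y‖²) ≤ ‖X‖² s (1 - α s)` with `s = ‖y‖²`.
Taking `x` parallel to `Xy` with `‖x‖² = 1 - s` attains `‖Xy‖² s (1 - α s)`, hence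
`‖T‖_α = ‖X‖ √(max_{s ∈ [0,1]} s (1 - α s))`. The maximum sits at `s = 1/(2α)` when `α > 1/2`
and at `s = 1` otherwise. -/

section AlphaNorm

variable {α : ℝ} {T : H →L[ℂ] H}

lemma alphaNorm_nonneg : 0 ≤ alphaNorm α T :=
  Real.sSup_nonneg fun _ ⟨_, _, hr⟩ => hr ▸ Real.sqrt_nonneg _

lemma alphaNorm_le {c : ℝ} (hc : 0 ≤ c)
    (h : ∀ x, ‖x‖ = 1 → α * ‖(inner ℂ (T x) x : ℂ)‖ ^ 2 + (1 - α) * ‖T x‖ ^ 2 ≤ c ^ 2) :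
    alphaNorm α T ≤ c :=
  Real.sSup_le (fun _ ⟨x, hx, hr⟩ => hr ▸ Real.sqrt_le_iff.2 ⟨hc, h x hx⟩) hc

lemma sqrt_le_alphaNorm (hα0 : 0 ≤ α) (hα1 : α ≤ 1) {x : H} (hx : ‖x‖ = 1) :
    Real.sqrt (α * ‖(inner ℂ (T x) x : ℂ)‖ ^ 2 + (1 - α) * ‖T x‖ ^ 2) ≤ alphaNorm α T := by
  refine le_csSup ⟨‖T‖, ?_⟩ ⟨x, hx, rfl⟩
  rintro _ ⟨z, hz, rfl⟩
  have hinner : ‖(inner ℂ (T z) z : ℂ)‖ ≤ ‖T‖ := by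
    simpa [hz] using (norm_inner_le_norm (T z) z).trans (by simpa [hz] using T.le_opNorm z)
  have hTz : ‖T z‖ ≤ ‖T‖ := by simpa [hz] using T.le_opNorm z
  refine Real.sqrt_le_iff.2 ⟨norm_nonneg T, ?_⟩
  have := pow_le_pow_left₀ (norm_nonneg _) hinner 2
  have := pow_le_pow_left₀ (norm_nonneg _) hTz 2
  nlinarith

end AlphaNorm

lemma norm_pr_sq {E : Type*} [NormedAddCommGroup E] (x y : E) : ‖pr x y‖ ^ 2 = ‖x‖ ^ 2 + ‖y‖ ^ 2 :=
  WithLp.prod_norm_sq_eq_of_L2 _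

lemma inner_pr (a b x y : H) :
    (inner ℂ (pr a b) (pr x y) : ℂ) = inner ℂ a x + inner ℂ b y :=
  WithLp.prod_inner_apply _ _

lemma alpha_mul_norm_inner_sq_add_le {α : ℝ} (hα0 : 0 ≤ α) (v x : H) :
    α * ‖(inner ℂ v x : ℂ)‖ ^ 2 + (1 - α) * ‖v‖ ^ 2 ≤ ‖v‖ ^ 2 * (α * ‖x‖ ^ 2 + (1 - α)) := by
  have := pow_le_pow_left₀ (norm_nonneg _) (norm_inner_le_norm (𝕜 := ℂ) v x) 2
  rw [mul_pow] at this
  nlinarith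

lemma isMaxOn_mul_one_sub_mul_of_le_half {α : ℝ} (hα0 : 0 ≤ α) (hα : α ≤ 1 / 2) :
    IsMaxOn (fun s => s * (1 - α * s)) (Set.Icc 0 1) 1 := fun s hs => by
  have : 0 ≤ (1 - s) * (1 - α * (1 + s)) := mul_nonneg (by linarith [hs.2]) (by nlinarith [hs.2])
  change s * (1 - α * s) ≤ 1 * (1 - α * 1)
  linarith

lemma isMaxOn_mul_one_sub_mul_of_half_lt {α : ℝ} (hα : 1 / 2 < α) :
    IsMaxOn (fun s => s * (1 - α * s)) (Set.Icc 0 1) (2 * α)⁻¹ := fun s _ => by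
  change s * (1 - α * s) ≤ (2 * α)⁻¹ * (1 - α * (2 * α)⁻¹)
  have hα0 : 0 < α := by linarith
  have : (2 * α)⁻¹ * (1 - α * (2 * α)⁻¹) - s * (1 - α * s) = α * (s - (2 * α)⁻¹) ^ 2 := by
    field_simp; ring
  linarith [mul_nonneg hα0.le (sq_nonneg (s - (2 * α)⁻¹))]

section NilpotentBlock

variable {α : ℝ} {X : H →L[ℂ] H} {T : WithLp 2 (H × H) →L[ℂ] WithLp 2 (H × H)}

lemma alphaNorm_radicand_block (hT : ∀ x y : H, T (pr x y) = pr (X y) 0) (x y : H) :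
    α * ‖(inner ℂ (T (pr x y)) (pr x y) : ℂ)‖ ^ 2 + (1 - α) * ‖T (pr x y)‖ ^ 2 =
      α * ‖(inner ℂ (X y) x : ℂ)‖ ^ 2 + (1 - α) * ‖X y‖ ^ 2 := by
  have hnorm : ‖T (pr x y)‖ ^ 2 = ‖X y‖ ^ 2 := by simp [hT, norm_pr_sq]
  rw [hnorm, hT, inner_pr, inner_zero_left, add_zero]

lemma alphaNorm_block_le (hα0 : 0 ≤ α) (hα1 : α ≤ 1)
    (hT : ∀ x y : H, T (pr x y) = pr (X y) 0) {s₀ : ℝ}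
    (hmax : IsMaxOn (fun s => s * (1 - α * s)) (Set.Icc 0 1) s₀) :
    alphaNorm α T ≤ ‖X‖ * Real.sqrt (s₀ * (1 - α * s₀)) := by
  refine alphaNorm_le (by positivity) fun z hz => ?_
  obtain ⟨x, y⟩ := z
  change α * ‖(inner ℂ (T (pr x y)) (pr x y) : ℂ)‖ ^ 2 + (1 - α) * ‖T (pr x y)‖ ^ 2 ≤ _
  have hxy : ‖x‖ ^ 2 + ‖y‖ ^ 2 = 1 := by
    rw [← norm_pr_sq]; exact (congrArg (· ^ 2) hz).trans (one_pow 2)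
  have hy : ‖y‖ ^ 2 ∈ Set.Icc (0 : ℝ) 1 := ⟨sq_nonneg _, by nlinarith [sq_nonneg ‖x‖]⟩
  have hXy : ‖X y‖ ^ 2 ≤ ‖X‖ ^ 2 * ‖y‖ ^ 2 := by
    rw [← mul_pow]; exact pow_le_pow_left₀ (norm_nonneg _) (X.le_opNorm y) 2
  have hM : 0 ≤ s₀ * (1 - α * s₀) := le_trans (by simp) (hmax (Set.left_mem_Icc.2 zero_le_one))
  rw [alphaNorm_radicand_block hT, mul_pow, Real.sq_sqrt hM]
  calc _ ≤ ‖X y‖ ^ 2 * (α * ‖x‖ ^ 2 + (1 - α)) := alpha_mul_norm_inner_sq_add_le hα0 _ _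
    _ = ‖X y‖ ^ 2 * (1 - α * ‖y‖ ^ 2) := by linear_combination (‖X y‖ ^ 2 * α) * hxy
    _ ≤ ‖X‖ ^ 2 * ‖y‖ ^ 2 * (1 - α * ‖y‖ ^ 2) := by gcongr; nlinarith [hy.2]
    _ ≤ ‖X‖ ^ 2 * (s₀ * (1 - α * s₀)) := by
      rw [mul_assoc]; exact mul_le_mul_of_nonneg_left (hmax hy) (sq_nonneg _)

lemma norm_apply_mul_sqrt_le_alphaNorm_block (hα0 : 0 ≤ α) (hα1 : α ≤ 1)
    (hT : ∀ x y : H, T (pr x y) = pr (X y) 0) {s : ℝ} (hs : s ∈ Set.Icc (0 : ℝ) 1)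
    {y : H} (hy : ‖y‖ = 1) :
    ‖X y‖ * Real.sqrt (s * (1 - α * s)) ≤ alphaNorm α T := by
  rcases eq_or_ne (X y) 0 with hXy | hXy
  · simpa [hXy] using alphaNorm_nonneg
  set t := ‖X y‖
  have ht : 0 < t := norm_pos_iff.2 hXy
  have hc : Real.sqrt (1 - s) ^ 2 = 1 - s := Real.sq_sqrt (by linarith [hs.2])
  have hd : Real.sqrt s ^ 2 = s := Real.sq_sqrt hs.1
  set x : H := ((Real.sqrt (1 - s) / t : ℝ) : ℂ) • X y
  set y' : H := ((Real.sqrt s : ℝ) : ℂ) • y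
  have hx : ‖x‖ = Real.sqrt (1 - s) := by
    simp [x, norm_smul, abs_of_nonneg (Real.sqrt_nonneg _), t, ht.ne']
  have hy' : ‖y'‖ = Real.sqrt s := by simp [y', norm_smul, hy]
  have hXy' : X y' = ((Real.sqrt s : ℝ) : ℂ) • X y := map_smul _ _ _
  have hz : ‖pr x y'‖ = 1 := by
    rw [← pow_eq_one_iff_of_nonneg (norm_nonneg _) two_ne_zero, norm_pr_sq, hx, hy', hc, hd,
      sub_add_cancel]
  have hinner : ‖(inner ℂ (X y') x : ℂ)‖ = Real.sqrt s * Real.sqrt (1 - s) * t := by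
    simp [hXy', x, inner_self_eq_norm_sq_to_K, abs_of_nonneg (Real.sqrt_nonneg _), t]
    field_simp
  have hvalue := sqrt_le_alphaNorm (T := T) hα0 hα1 hz
  rwa [alphaNorm_radicand_block hT, hinner, hXy', norm_smul, Complex.norm_real, Real.norm_eq_abs,
    abs_of_nonneg (Real.sqrt_nonneg _),
    show α * (Real.sqrt s * Real.sqrt (1 - s) * t) ^ 2 + (1 - α) * (Real.sqrt s * t) ^ 2 =
      t ^ 2 * (s * (1 - α * s)) by rw [mul_pow, mul_pow, mul_pow, hc, hd]; ring,
    Real.sqrt_mul (sq_nonneg t), Real.sqrt_sq ht.le] at hvalue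

lemma le_alphaNorm_block (hα0 : 0 ≤ α) (hα1 : α ≤ 1)
    (hT : ∀ x y : H, T (pr x y) = pr (X y) 0) {s : ℝ} (hs : s ∈ Set.Icc (0 : ℝ) 1) :
    ‖X‖ * Real.sqrt (s * (1 - α * s)) ≤ alphaNorm α T := by
  have h : ‖((Real.sqrt (s * (1 - α * s)) : ℝ) : ℂ) • X‖ ≤ alphaNorm α T := by
    refine ContinuousLinearMap.opNorm_le_of_unit_norm alphaNorm_nonneg fun y hy => ?_
    rw [smul_apply, norm_smul, Complex.norm_real, Real.norm_eq_abs,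
      abs_of_nonneg (Real.sqrt_nonneg _), mul_comm]
    exact norm_apply_mul_sqrt_le_alphaNorm_block hα0 hα1 hT hs hy
  rwa [norm_smul, Complex.norm_real, Real.norm_eq_abs, abs_of_nonneg (Real.sqrt_nonneg _),
    mul_comm] at h

lemma alphaNorm_block_eq (hα0 : 0 ≤ α) (hα1 : α ≤ 1)
    (hT : ∀ x y : H, T (pr x y) = pr (X y) 0) {s₀ : ℝ} (hs₀ : s₀ ∈ Set.Icc (0 : ℝ) 1)
    (hmax : IsMaxOn (fun s => s * (1 - α * s)) (Set.Icc 0 1) s₀) :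
    alphaNorm α T = ‖X‖ * Real.sqrt (s₀ * (1 - α * s₀)) :=
  (alphaNorm_block_le hα0 hα1 hT hmax).antisymm (le_alphaNorm_block hα0 hα1 hT hs₀)

end NilpotentBlock

/-- Exact value of `‖[[0, X],[0, 0]]‖_α`: it equals `‖X‖/(2√α)` when `α > 1/2`, and
`√(1-α)·‖X‖` when `α ≤ 1/2`. -/
theorem alphaNorm_nilpotent_block (α : ℝ) (hα0 : 0 ≤ α) (hα1 : α ≤ 1) (X : H →L[ℂ] H)
    (T : WithLp 2 (H × H) →L[ℂ] WithLp 2 (H × H))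
    (hT : ∀ x y : H, T (pr x y) = pr (X y) 0) :
    (1 / 2 < α → alphaNorm α T = ‖X‖ / (2 * Real.sqrt α)) ∧
    (α ≤ 1 / 2 → alphaNorm α T = Real.sqrt (1 - α) * ‖X‖) := by
  refine ⟨fun hα => ?_, fun hα => ?_⟩
  · have hαpos : 0 < α := by linarith
    have hs₀ : (2 * α)⁻¹ ∈ Set.Icc (0 : ℝ) 1 :=
      ⟨by positivity, inv_le_one_of_one_le₀ (by linarith)⟩
    have hvalue : (2 * α)⁻¹ * (1 - α * (2 * α)⁻¹) = (2 * Real.sqrt α)⁻¹ ^ 2 := by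
      rw [inv_pow, mul_pow, Real.sq_sqrt hαpos.le]; field_simp; ring
    rw [alphaNorm_block_eq hα0 hα1 hT hs₀ (isMaxOn_mul_one_sub_mul_of_half_lt hα), hvalue,
      Real.sqrt_sq (by positivity), div_eq_mul_inv]
  · rw [alphaNorm_block_eq hα0 hα1 hT (Set.right_mem_Icc.2 zero_le_one)
      (isMaxOn_mul_one_sub_mul_of_le_half hα0 hα), one_mul, mul_one, mul_comm]
end

section
/- Let T = (T_ij) be an n×n operator matrix with T_ij ∈ B(H) and f, g nonnegative continuous functions on [0,∞) with f(t)g(t) = t. Then the numerical radius satisfies w(T) ≤ w(T̃), where T̃ = (t̃_ij) is the n×n scalar matrix with t̃_ii = ‖f²(|T_ii|) + g²(|T_ii*|)‖/2 and t̃_ij = ‖f²(|T_ij|)‖^{1/2}‖g²(|T_ij*|)‖^{1/2} for i ≠ j. -/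
open scoped Matrix

/-- The modulus `|A| = (A*A)^{1/2}` of a bounded operator, via the continuous functional
calculus. -/
noncomputable def absOp {H : Type*} [NormedAddCommGroup H] [InnerProductSpace ℂ H]
    [CompleteSpace H] (A : H →L[ℂ] H) : H →L[ℂ] H :=
  cfc Real.sqrt (ContinuousLinearMap.adjoint A * A)

/-
Mixed Schwarz inequality without polar decomposition: for `ε > 0` factor
`A = B * k(A*A)` with `k t = f(√t) + ε` and `B = A * k(A*A)⁻¹`. Since `A` intertwines `A*A` with
`AA*` (`A φ(A*A) = φ(AA*) A`, by Weierstrass approximation), `BB* = (t / k(t)²)(AA*)`, and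
`t = f(√t)² g(√t)² ≤ k(t)² g(√t)²` gives `BB* ≤ g(|A*|)²`, i.e. `‖B*y‖ ≤ ‖g(|A*|)y‖`. Hence
`|⟨Ax,y⟩| ≤ (‖f(|A|)x‖ + ε‖x‖)‖g(|A*|)y‖`; let `ε → 0`.
Applied to each entry `T_ij` (with AM-GM on the diagonal), it bounds `|⟨Tx,x⟩|` by
`∑ t̃_ij ‖x_j‖ ‖x_i‖ = ⟨T̃y,y⟩` for the unit vector `y = (‖x_i‖)_i`.
-/

open Filter Topology
open scoped Polynomial InnerProductSpace

theorem SemiconjBy.aeval {R A : Type*} [CommSemiring R] [Semiring A] [Algebra R A]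
    {a x y : A} (h : SemiconjBy a x y) (q : R[X]) :
    SemiconjBy a (Polynomial.aeval x q) (Polynomial.aeval y q) := by
  induction q using Polynomial.induction_on' with
  | add p q hp hq => simpa only [map_add] using hp.add_right hq
  | monomial n r =>
    simpa only [Polynomial.aeval_monomial] using
      SemiconjBy.mul_right (Algebra.commute_algebraMap_right r a) (h.pow_right n)

theorem exists_tendstoUniformlyOn_polynomial_eval {a b : ℝ} {φ : ℝ → ℝ}
    (hφ : ContinuousOn φ (Set.Icc a b)) :
    ∃ p : ℕ → ℝ[X], TendstoUniformlyOn (fun k => (p k).eval) φ atTop (Set.Icc a b) := by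
  choose p hp using fun k : ℕ =>
    exists_polynomial_near_of_continuousOn a b φ hφ (1 / (k + 1)) Nat.one_div_pos_of_nat
  refine ⟨p, Metric.tendstoUniformlyOn_iff.2 fun ε hε => ?_⟩
  obtain ⟨N, hN⟩ := exists_nat_one_div_lt hε
  filter_upwards [eventually_ge_atTop N] with k hk t ht
  rw [Real.dist_eq, abs_sub_comm]
  exact (hp k t ht).trans_le ((Nat.one_div_le_one_div hk).trans hN.le)

section CStarAlgebra

variable {A : Type*} [CStarAlgebra A] [PartialOrder A] [StarOrderedRing A]

theorem mul_cfc_star_mul_self (a : A) {φ : ℝ → ℝ} (hφ : ContinuousOn φ (Set.Ici 0)) :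
    a * cfc φ (star a * a) = cfc φ (a * star a) * a := by
  obtain ⟨M, hM⟩ := ((spectrum.isCompact (𝕜 := ℝ) (star a * a)).union
    (spectrum.isCompact (𝕜 := ℝ) (a * star a))).isBounded.subset_closedBall 0
  have hIcc {b : A} (hb : 0 ≤ b) (hbM : spectrum ℝ b ⊆ Metric.closedBall 0 M) :
      spectrum ℝ b ⊆ Set.Icc 0 M := fun t ht =>
    ⟨spectrum_nonneg_of_nonneg hb ht, (le_abs_self t).trans (by simpa using hbM ht)⟩
  obtain ⟨p, hp⟩ := exists_tendstoUniformlyOn_polynomial_eval (hφ.mono Set.Icc_subset_Ici_self)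
  have hlim {b : A} (hb : spectrum ℝ b ⊆ Set.Icc 0 M) :
      Tendsto (fun k => cfc (p k).eval b) atTop (𝓝 (cfc φ b)) :=
    tendsto_cfc_fun (hp.mono hb) (Eventually.of_forall fun k => (p k).continuousOn)
  have hpoly (k : ℕ) : a * cfc (p k).eval (star a * a) = cfc (p k).eval (a * star a) * a := by
    rw [cfc_polynomial _ _ (.star_mul_self a), cfc_polynomial _ _ (.mul_star_self a)]
    exact SemiconjBy.aeval (mul_assoc _ _ _).symm _
  have hP := hlim (hIcc (star_mul_self_nonneg a) (Set.subset_union_left.trans hM))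
  have hQ := hlim (hIcc (mul_star_self_nonneg a) (Set.subset_union_right.trans hM))
  exact tendsto_nhds_unique ((hP.const_mul a).congr hpoly) (hQ.mul_const a)

theorem exists_eq_mul_cfc_add_const_and_mul_star_le (a : A) {F G : ℝ → ℝ}
    (hF : ContinuousOn F (Set.Ici 0)) (hG : ContinuousOn G (Set.Ici 0))
    (hF0 : ∀ t ∈ Set.Ici (0 : ℝ), 0 ≤ F t) (hFG : ∀ t ∈ Set.Ici (0 : ℝ), (F t * G t) ^ 2 = t)
    {ε : ℝ} (hε : 0 < ε) :
    ∃ B : A, a = B * cfc (fun t => F t + ε) (star a * a) ∧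
      B * star B ≤ cfc G (a * star a) ^ 2 := by
  have hP : spectrum ℝ (star a * a) ⊆ Set.Ici 0 := fun t ht =>
    spectrum_nonneg_of_nonneg (star_mul_self_nonneg a) ht
  have hQ : spectrum ℝ (a * star a) ⊆ Set.Ici 0 := fun t ht =>
    spectrum_nonneg_of_nonneg (mul_star_self_nonneg a) ht
  have hpos : ∀ t ∈ Set.Ici (0 : ℝ), 0 < F t + ε := fun t ht => by linarith [hF0 t ht]
  have hk : ContinuousOn (fun t => F t + ε) (Set.Ici 0) := hF.add continuousOn_const
  have hh : ContinuousOn (fun t => (F t + ε)⁻¹) (Set.Ici 0) :=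
    hk.inv₀ fun t ht => (hpos t ht).ne'
  have hh2 : ContinuousOn (fun t => (F t + ε)⁻¹ ^ 2) (Set.Ici 0) := hh.pow 2
  set B := a * cfc (fun t => (F t + ε)⁻¹) (star a * a)
  refine ⟨B, ?_, ?_⟩
  · rw [mul_assoc, ← cfc_mul _ _ _ (hh.mono hP) (hk.mono hP),
      cfc_congr (g := fun _ => 1) fun t ht => inv_mul_cancel₀ (hpos t (hP ht)).ne',
      cfc_const_one ℝ _, mul_one]
  · have hBB : B * star B = cfc (fun t => (F t + ε)⁻¹ ^ 2 * t) (a * star a) := by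
      rw [star_mul, (cfc_predicate (p := IsSelfAdjoint) _ (star a * a)).star_eq, mul_assoc,
        ← mul_assoc _ _ (star a), ← sq, ← cfc_pow _ _ _ (hh.mono hP), ← mul_assoc,
        mul_cfc_star_mul_self a hh2, mul_assoc, cfc_mul _ (fun t => t) _ (hh2.mono hQ), cfc_id' ℝ (a * star a)]
    rw [hBB, ← cfc_pow _ _ _ (hG.mono hQ)]
    refine cfc_mono (fun t ht => ?_) ((hh2.mul continuousOn_id).mono hQ)
      ((hG.pow 2).mono hQ)
    have hFt : F t ^ 2 ≤ (F t + ε) ^ 2 := by gcongr <;> linarith [hF0 t (hQ ht)]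
    calc (F t + ε)⁻¹ ^ 2 * t = (F t + ε)⁻¹ ^ 2 * (F t ^ 2 * G t ^ 2) := by
          rw [← mul_pow, hFG t (hQ ht)]
      _ ≤ (F t + ε)⁻¹ ^ 2 * ((F t + ε) ^ 2 * G t ^ 2) := by gcongr
      _ = G t ^ 2 := by field_simp [(hpos t (hQ ht)).ne']

end CStarAlgebra

section Hilbert

open ContinuousLinearMap

variable {H : Type*} [NormedAddCommGroup H] [InnerProductSpace ℂ H] [CompleteSpace H]

theorem norm_apply_le_of_star_mul_self_le {X Y : H →L[ℂ] H} (h : star X * X ≤ star Y * Y)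
    (v : H) : ‖X v‖ ≤ ‖Y v‖ := by
  have hsq : ‖X v‖ ^ 2 ≤ ‖Y v‖ ^ 2 := by
    have := ((le_def _ _).1 h).re_inner_nonneg_left v
    rw [sub_apply, inner_sub_left, map_sub, sub_nonneg] at this
    simpa only [apply_norm_sq_eq_inner_adjoint_left, star_eq_adjoint, mul_def] using this
  exact (sq_le_sq₀ (norm_nonneg _) (norm_nonneg _)).1 hsq

theorem norm_inner_le_norm_cfc_star_mul_self_mul {F G : ℝ → ℝ}
    (hF : ContinuousOn F (Set.Ici 0)) (hG : ContinuousOn G (Set.Ici 0))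
    (hF0 : ∀ t ∈ Set.Ici (0 : ℝ), 0 ≤ F t) (hFG : ∀ t ∈ Set.Ici (0 : ℝ), (F t * G t) ^ 2 = t)
    (a : H →L[ℂ] H) (x y : H) :
    ‖⟪a x, y⟫_ℂ‖ ≤ ‖cfc F (star a * a) x‖ * ‖cfc G (a * star a) y‖ := by
  have hP : spectrum ℝ (star a * a) ⊆ Set.Ici 0 := fun t ht =>
    spectrum_nonneg_of_nonneg (star_mul_self_nonneg a) ht
  have key : ∀ ε > 0, ‖⟪a x, y⟫_ℂ‖ ≤
      (‖cfc F (star a * a) x‖ + ε * ‖x‖) * ‖cfc G (a * star a) y‖ := by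
    intro ε hε
    obtain ⟨B, haB, hB⟩ := exists_eq_mul_cfc_add_const_and_mul_star_le a hF hG hF0 hFG hε
    have hK : ‖cfc (fun t => F t + ε) (star a * a) x‖ ≤ ‖cfc F (star a * a) x‖ + ε * ‖x‖ := by
      rw [cfc_add_const _ _ _ (hF.mono hP) (.star_mul_self a), add_apply,
        Algebra.algebraMap_eq_smul_one, smul_apply, one_apply_eq_self]
      refine (norm_add_le _ _).trans_eq ?_
      rw [norm_smul, Real.norm_of_nonneg hε.le]
    have hB' : ‖star B y‖ ≤ ‖cfc G (a * star a) y‖ := by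
      refine norm_apply_le_of_star_mul_self_le ?_ y
      rwa [star_star, (cfc_predicate (p := IsSelfAdjoint) _ _).star_eq, ← sq]
    calc ‖⟪a x, y⟫_ℂ‖ = ‖⟪cfc (fun t => F t + ε) (star a * a) x, star B y⟫_ℂ‖ := by
          rw [star_eq_adjoint B, adjoint_inner_right, ← mul_apply_eq_comp B, ← haB]
      _ ≤ ‖cfc (fun t => F t + ε) (star a * a) x‖ * ‖star B y‖ := norm_inner_le_norm _ _
      _ ≤ (‖cfc F (star a * a) x‖ + ε * ‖x‖) * ‖cfc G (a * star a) y‖ := by gcongr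
  have hlim : Tendsto (fun ε => (‖cfc F (star a * a) x‖ + ε * ‖x‖) * ‖cfc G (a * star a) y‖)
      (𝓝[>] 0) (𝓝 (‖cfc F (star a * a) x‖ * ‖cfc G (a * star a) y‖)) := by
    exact tendsto_nhdsWithin_of_tendsto_nhds (Continuous.tendsto' (by fun_prop) _ _ (by simp))
  exact ge_of_tendsto hlim (eventually_nhdsWithin_of_forall key)

theorem cfc_absOp {f : ℝ → ℝ} (hf : ContinuousOn f (Set.Ici 0)) (a : H →L[ℂ] H) :
    cfc f (absOp a) = cfc (fun t => f √t) (star a * a) := by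
  rw [absOp, ← star_eq_adjoint, ← cfc_comp' f Real.sqrt _
    (hf.mono (by rintro - ⟨t, -, rfl⟩; exact Real.sqrt_nonneg t))]

theorem norm_inner_le_norm_cfc_absOp_mul {f g : ℝ → ℝ}
    (hf : ContinuousOn f (Set.Ici 0)) (hg : ContinuousOn g (Set.Ici 0))
    (hf0 : ∀ t ∈ Set.Ici (0 : ℝ), 0 ≤ f t) (hfg : ∀ t ∈ Set.Ici (0 : ℝ), f t * g t = t)
    (a : H →L[ℂ] H) (x y : H) :
    ‖⟪a x, y⟫_ℂ‖ ≤ ‖cfc f (absOp a) x‖ * ‖cfc g (absOp (adjoint a)) y‖ := by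
  have hsqrt : Set.MapsTo Real.sqrt (Set.Ici 0) (Set.Ici 0) := fun t _ => Real.sqrt_nonneg t
  rw [cfc_absOp hf, cfc_absOp hg, ← star_eq_adjoint, star_star]
  refine norm_inner_le_norm_cfc_star_mul_self_mul (F := fun t => f √t) (G := fun t => g √t)
    (hf.comp Real.continuous_sqrt.continuousOn hsqrt)
    (hg.comp Real.continuous_sqrt.continuousOn hsqrt) (fun t ht => hf0 _ (hsqrt ht))
    (fun t ht => ?_) a x y
  rw [hfg _ (hsqrt ht), Real.sq_sqrt ht]

theorem IsSelfAdjoint.sqrt_norm_sq {E : Type*} [NormedRing E] [StarRing E] [CStarRing E] {x : E}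
    (hx : IsSelfAdjoint x) : √‖x ^ 2‖ = ‖x‖ := by
  rw [← pow_one 2, hx.norm_pow_two_pow 1, pow_one, Real.sqrt_sq (norm_nonneg x)]

theorem IsSelfAdjoint.norm_apply_sq {X : H →L[ℂ] H} (hX : IsSelfAdjoint X) (u : H) :
    ‖X u‖ ^ 2 = RCLike.re ⟪(X ^ 2) u, u⟫_ℂ := by
  rw [apply_norm_sq_eq_inner_adjoint_left, ← star_eq_adjoint, hX.star_eq, sq, mul_def]

theorem norm_inner_le_sqrt_norm_sq_mul {f g : ℝ → ℝ}
    (hf : ContinuousOn f (Set.Ici 0)) (hg : ContinuousOn g (Set.Ici 0))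
    (hf0 : ∀ t ∈ Set.Ici (0 : ℝ), 0 ≤ f t) (hfg : ∀ t ∈ Set.Ici (0 : ℝ), f t * g t = t)
    (a : H →L[ℂ] H) (u v : H) :
    ‖⟪a u, v⟫_ℂ‖ ≤ √‖cfc f (absOp a) ^ 2‖ * √‖cfc g (absOp (adjoint a)) ^ 2‖ * (‖u‖ * ‖v‖) := by
  rw [(cfc_predicate (p := IsSelfAdjoint) _ _).sqrt_norm_sq,
    (cfc_predicate (p := IsSelfAdjoint) _ _).sqrt_norm_sq]
  calc ‖⟪a u, v⟫_ℂ‖ ≤ ‖cfc f (absOp a) u‖ * ‖cfc g (absOp (adjoint a)) v‖ :=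
        norm_inner_le_norm_cfc_absOp_mul hf hg hf0 hfg a u v
    _ ≤ ‖cfc f (absOp a)‖ * ‖u‖ * (‖cfc g (absOp (adjoint a))‖ * ‖v‖) := by
        gcongr <;> exact le_opNorm _ _
    _ = _ := by ring

theorem norm_inner_self_le_norm_sq_add_sq_div_two {f g : ℝ → ℝ}
    (hf : ContinuousOn f (Set.Ici 0)) (hg : ContinuousOn g (Set.Ici 0))
    (hf0 : ∀ t ∈ Set.Ici (0 : ℝ), 0 ≤ f t) (hfg : ∀ t ∈ Set.Ici (0 : ℝ), f t * g t = t)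
    (a : H →L[ℂ] H) (u : H) :
    ‖⟪a u, u⟫_ℂ‖ ≤ ‖cfc f (absOp a) ^ 2 + cfc g (absOp (adjoint a)) ^ 2‖ / 2 * (‖u‖ * ‖u‖) := by
  set X := cfc f (absOp a)
  set Y := cfc g (absOp (adjoint a))
  have hXY : ‖X u‖ ^ 2 + ‖Y u‖ ^ 2 = RCLike.re ⟪(X ^ 2 + Y ^ 2) u, u⟫_ℂ := by
    rw [(cfc_predicate (p := IsSelfAdjoint) _ _).norm_apply_sq,
      (cfc_predicate (p := IsSelfAdjoint) _ _).norm_apply_sq, add_apply, inner_add_left, map_add]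
  calc ‖⟪a u, u⟫_ℂ‖ ≤ ‖X u‖ * ‖Y u‖ := norm_inner_le_norm_cfc_absOp_mul hf hg hf0 hfg a u u
    _ ≤ (‖X u‖ ^ 2 + ‖Y u‖ ^ 2) / 2 := by linarith [two_mul_le_add_sq ‖X u‖ ‖Y u‖]
    _ ≤ ‖(X ^ 2 + Y ^ 2) u‖ * ‖u‖ / 2 := by rw [hXY]; gcongr; exact re_inner_le_norm _ _
    _ ≤ ‖X ^ 2 + Y ^ 2‖ / 2 * (‖u‖ * ‖u‖) := by
        rw [div_mul_eq_mul_div, ← mul_assoc]; gcongr; exact le_opNorm _ _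

end Hilbert

section NumRadius

variable {H : Type*} [NormedAddCommGroup H] [InnerProductSpace ℂ H]

theorem numRadius_nonneg (T : H →L[ℂ] H) : 0 ≤ numRadius T :=
  Real.sSup_nonneg <| by rintro _ ⟨x, -, rfl⟩; exact norm_nonneg _

theorem norm_inner_le_numRadius (T : H →L[ℂ] H) {x : H} (hx : ‖x‖ = 1) :
    ‖⟪T x, x⟫_ℂ‖ ≤ numRadius T := by
  refine le_csSup ⟨‖T‖, ?_⟩ ⟨x, hx, rfl⟩
  rintro _ ⟨y, hy, rfl⟩
  simpa [hy] using (norm_inner_le_norm (𝕜 := ℂ) (T y) y).trans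
    (mul_le_mul_of_nonneg_right (T.le_opNorm y) (norm_nonneg y))

theorem numRadius_le {T : H →L[ℂ] H} {c : ℝ} (hc : 0 ≤ c)
    (h : ∀ x : H, ‖x‖ = 1 → ‖⟪T x, x⟫_ℂ‖ ≤ c) : numRadius T ≤ c :=
  Real.sSup_le (by rintro _ ⟨x, hx, rfl⟩; exact h x hx) hc

end NumRadius

theorem inner_eq_sum_sum_of_apply_eq {ι H : Type*} [Fintype ι] [NormedAddCommGroup H]
    [InnerProductSpace ℂ H] {T : PiLp 2 (fun _ : ι => H) →L[ℂ] PiLp 2 (fun _ : ι => H)}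
    {Tij : ι → ι → H →L[ℂ] H} (hT : ∀ x i, T x i = ∑ j, Tij i j (x j))
    (x : PiLp 2 (fun _ : ι => H)) :
    ⟪T x, x⟫_ℂ = ∑ i, ∑ j, ⟪Tij i j (x j), x i⟫_ℂ := by
  simp only [PiLp.inner_apply, hT, sum_inner]

theorem norm_toLp_norm {ι H : Type*} [Fintype ι] [NormedAddCommGroup H]
    (x : PiLp 2 (fun _ : ι => H)) :
    ‖(WithLp.toLp 2 fun i => (‖x i‖ : ℂ) : EuclideanSpace ℂ ι)‖ = ‖x‖ := by
  simp [EuclideanSpace.norm_eq, PiLp.norm_eq_of_L2]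

theorem inner_toEuclideanCLM_map_ofReal {ι : Type*} [Fintype ι] [DecidableEq ι]
    (A : Matrix ι ι ℝ) (r : ι → ℝ) :
    ⟪Matrix.toEuclideanCLM (𝕜 := ℂ) (A.map Complex.ofReal) (WithLp.toLp 2 fun i => (r i : ℂ)),
      WithLp.toLp 2 fun i => (r i : ℂ)⟫_ℂ = ((r ⬝ᵥ A *ᵥ r : ℝ) : ℂ) := by
  rw [Matrix.toEuclideanCLM_toLp, EuclideanSpace.inner_toLp_toLp]
  simp [dotProduct, Matrix.mulVec, Finset.mul_sum]

theorem numRadius_opMatrix_fg_bound_general {n : ℕ} {H : Type*}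
    [NormedAddCommGroup H] [InnerProductSpace ℂ H] [CompleteSpace H]
    (f g : ℝ → ℝ) (hf : ContinuousOn f (Set.Ici 0)) (hg : ContinuousOn g (Set.Ici 0))
    (hf0 : ∀ t ∈ Set.Ici (0 : ℝ), 0 ≤ f t)
    (hfg : ∀ t ∈ Set.Ici (0 : ℝ), f t * g t = t)
    (Tij : ∀ _ _ : Fin n, H →L[ℂ] H)
    (T : PiLp 2 (fun _ : Fin n => H) →L[ℂ] PiLp 2 (fun _ : Fin n => H))
    (hT : ∀ (x : PiLp 2 (fun _ : Fin n => H)) (i : Fin n), T x i = ∑ j, Tij i j (x j))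
    (Ttil : Matrix (Fin n) (Fin n) ℝ)
    (hTtil : ∀ i j, Ttil i j =
      if i = j then
        ‖(cfc f (absOp (Tij i i))) ^ 2 +
          (cfc g (absOp (ContinuousLinearMap.adjoint (Tij i i)))) ^ 2‖ / 2
      else
        Real.sqrt ‖(cfc f (absOp (Tij i j))) ^ 2‖ *
          Real.sqrt ‖(cfc g (absOp (ContinuousLinearMap.adjoint (Tij i j)))) ^ 2‖) :
    numRadius T ≤ numRadius (Matrix.toEuclideanCLM (𝕜 := ℂ) (Ttil.map Complex.ofReal)) := by
  refine numRadius_le (numRadius_nonneg _) fun x hx => ?_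
  have hentry (i j : Fin n) : ‖⟪Tij i j (x j), x i⟫_ℂ‖ ≤ Ttil i j * (‖x j‖ * ‖x i‖) := by
    rw [hTtil]
    split_ifs with hij
    · subst hij
      exact norm_inner_self_le_norm_sq_add_sq_div_two hf hg hf0 hfg _ _
    · exact norm_inner_le_sqrt_norm_sq_mul hf hg hf0 hfg _ _ _
  calc ‖⟪T x, x⟫_ℂ‖ ≤ ∑ i, ∑ j, ‖⟪Tij i j (x j), x i⟫_ℂ‖ := by
        rw [inner_eq_sum_sum_of_apply_eq hT]
        exact (norm_sum_le _ _).trans (Finset.sum_le_sum fun i _ => norm_sum_le _ _)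
    _ ≤ ∑ i, ∑ j, Ttil i j * (‖x j‖ * ‖x i‖) := by gcongr with i _ j _; exact hentry i j
    _ = (fun i => ‖x i‖) ⬝ᵥ Ttil *ᵥ (fun i => ‖x i‖) := by
        simp only [dotProduct, Matrix.mulVec, Finset.mul_sum]
        exact Finset.sum_congr rfl fun i _ => Finset.sum_congr rfl fun j _ => by ring
    _ ≤ ‖⟪Matrix.toEuclideanCLM (𝕜 := ℂ) (Ttil.map Complex.ofReal)
          (WithLp.toLp 2 fun i => (‖x i‖ : ℂ)), WithLp.toLp 2 fun i => (‖x i‖ : ℂ)⟫_ℂ‖ := by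
        rw [inner_toEuclideanCLM_map_ofReal, Complex.norm_real, Real.norm_eq_abs]
        exact le_abs_self _
    _ ≤ _ := norm_inner_le_numRadius _ ((norm_toLp_norm x).trans hx)

/-- `w(T) ≤ w(T̃)` where `t̃_ii = ‖f²(|T_ii|) + g²(|T_ii*|)‖/2` and
`t̃_ij = ‖f²(|T_ij|)‖^{1/2}‖g²(|T_ij*|)‖^{1/2}` for `i ≠ j`. -/
theorem numRadius_opMatrix_fg_bound {n : ℕ} {H : Type*}
    [NormedAddCommGroup H] [InnerProductSpace ℂ H] [CompleteSpace H]
    (f g : ℝ → ℝ) (hf : ContinuousOn f (Set.Ici 0)) (hg : ContinuousOn g (Set.Ici 0))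
    (hf0 : ∀ t ∈ Set.Ici (0 : ℝ), 0 ≤ f t) (hg0 : ∀ t ∈ Set.Ici (0 : ℝ), 0 ≤ g t)
    (hfg : ∀ t ∈ Set.Ici (0 : ℝ), f t * g t = t)
    (Tij : ∀ _ _ : Fin n, H →L[ℂ] H)
    (T : PiLp 2 (fun _ : Fin n => H) →L[ℂ] PiLp 2 (fun _ : Fin n => H))
    (hT : ∀ (x : PiLp 2 (fun _ : Fin n => H)) (i : Fin n), T x i = ∑ j, Tij i j (x j))
    (Ttil : Matrix (Fin n) (Fin n) ℝ)
    (hTtil : ∀ i j, Ttil i j =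
      if i = j then
        ‖(cfc f (absOp (Tij i i))) ^ 2 +
          (cfc g (absOp (ContinuousLinearMap.adjoint (Tij i i)))) ^ 2‖ / 2
      else
        Real.sqrt ‖(cfc f (absOp (Tij i j))) ^ 2‖ *
          Real.sqrt ‖(cfc g (absOp (ContinuousLinearMap.adjoint (Tij i j)))) ^ 2‖) :
    numRadius T ≤ numRadius (Matrix.toEuclideanCLM (𝕜 := ℂ) (Ttil.map Complex.ofReal)) :=
  numRadius_opMatrix_fg_bound_general f g hf hg hf0 hfg Tij T hT Ttil hTtil
end
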